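/- Let f : ℝ³ → ℝ² be given by f(x, y, z) = (xy, xz). Then: (i) the critical set Σ_f = {x : rank of the Fréchet derivative of f at x is < 2} equals the plane {(x,y,z) : x = 0}; (ii) V = f⁻¹(0) equals {(x,y,z) : x = 0} ∪ {(x,y,z) : y = z = 0}; (iii) f satisfies Milnor conditions (a) and (b) at 0; and (iv) for every ε > 0 and every η with 0 < η ≤ ε²/2, the Milnor tube B_ε³ ∩ f⁻¹(S_η¹) is not connected. -/

import Mathlib

open Metric Topology Set

noncomputable section

/-- The critical set of `g : ℝⁿ → ℝ^q`: points where the rank of the Fréchet derivative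
is `< q`. -/
def criticalSet (n q : ℕ) (g : EuclideanSpace ℝ (Fin n) → EuclideanSpace ℝ (Fin q)) :
    Set (EuclideanSpace ℝ (Fin n)) :=
  {x | Module.finrank ℝ (LinearMap.range (fderiv ℝ g x).toLinearMap) < q}

/-- The critical set `Σ_{(g,r)}` of the pair `(g, r)` with `r x = ‖x‖²`: points where the rank
of the Fréchet derivative of `x ↦ (g x, ‖x‖²)` is `< q + 1`. -/
def criticalSetPair (n q : ℕ) (g : EuclideanSpace ℝ (Fin n) → EuclideanSpace ℝ (Fin q)) :
    Set (EuclideanSpace ℝ (Fin n)) :=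
  {x | Module.finrank ℝ
    (LinearMap.range (fderiv ℝ (fun y => (g y, ‖y‖ ^ 2) :
      EuclideanSpace ℝ (Fin n) → EuclideanSpace ℝ (Fin q) × ℝ) x).toLinearMap) < q + 1}

/-- Milnor condition (a) at the origin: `Σ_g ⊆ g⁻¹(0)` in some neighborhood of `0`. -/
def MilnorConditionA (n q : ℕ) (g : EuclideanSpace ℝ (Fin n) → EuclideanSpace ℝ (Fin q)) :
    Prop :=
  ∃ U ∈ 𝓝 (0 : EuclideanSpace ℝ (Fin n)), ∀ x ∈ U, x ∈ criticalSet n q g → g x = 0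

/-- Milnor condition (b) at the origin: `0` is isolated in
`g⁻¹(0) ∩ closure(Σ_{(g,r)} \ g⁻¹(0))`. -/
def MilnorConditionB (n q : ℕ) (g : EuclideanSpace ℝ (Fin n) → EuclideanSpace ℝ (Fin q)) :
    Prop :=
  ∃ U ∈ 𝓝 (0 : EuclideanSpace ℝ (Fin n)),
    U ∩ g ⁻¹' {0} ∩ closure (criticalSetPair n q g \ g ⁻¹' {0}) ⊆ {0}

abbrev E3 := EuclideanSpace ℝ (Fin 3)
abbrev E2 := EuclideanSpace ℝ (Fin 2)
def P3 (i : Fin 3) : E3 →L[ℝ] ℝ := EuclideanSpace.proj i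
def L0 (v : E3) : E3 →L[ℝ] ℝ := v 0 • P3 1 + v 1 • P3 0
def L1 (v : E3) : E3 →L[ℝ] ℝ := v 0 • P3 2 + v 2 • P3 0
def e2 := EuclideanSpace.equiv (Fin 2) ℝ
def Dpi (v : E3) : E3 →L[ℝ] (Fin 2 → ℝ) := ContinuousLinearMap.pi ![L0 v, L1 v]
def Df (v : E3) : E3 →L[ℝ] E2 := (e2.symm.toContinuousLinearMap).comp (Dpi v)

example (i : Fin 3) (v : E3) : HasFDerivAt (fun y : E3 => y i) (P3 i) v := (P3 i).hasFDerivAt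

lemma hg (v : E3) : HasFDerivAt (fun (y : E3) (i : Fin 2) => ![y 0 * y 1, y 0 * y 2] i) (Dpi v) v := by
  apply hasFDerivAt_pi.2
  intro i
  fin_cases i <;>
    simp only [Matrix.cons_val_zero, Matrix.cons_val_one, Matrix.head_cons, Fin.isValue] <;>
  · exact ((P3 _).hasFDerivAt.mul (P3 _).hasFDerivAt)

lemma hDf (f : E3 → E2) (hf : ∀ v : E3, f v 0 = v 0 * v 1 ∧ f v 1 = v 0 * v 2)
    (v : E3) : HasFDerivAt f (Df v) v := by
  have hfe : f = fun y => e2.symm (fun i => ![y 0 * y 1, y 0 * y 2] i) := by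
    funext y
    ext i
    fin_cases i <;> simp [e2, (hf y).1, (hf y).2]
  rw [hfe]
  exact (e2.symm.toContinuousLinearMap.hasFDerivAt).comp v (hg v)

lemma fderiv_f (f : E3 → E2) (hf : ∀ v : E3, f v 0 = v 0 * v 1 ∧ f v 1 = v 0 * v 2)
    (v : E3) : fderiv ℝ f v = Df v := (hDf f hf v).fderiv

def e3 := EuclideanSpace.equiv (Fin 3) ℝ

lemma Df_apply (v h : E3) (i : Fin 2) :
    Df v h i = ![v 0 * h 1 + v 1 * h 0, v 0 * h 2 + v 2 * h 0] i := by
  fin_cases i <;>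
    simp [Df, Dpi, L0, L1, e2, P3, smul_eq_mul]

lemma rank_Df_eq_two (v : E3) (hv : v 0 ≠ 0) :
    Module.finrank ℝ (LinearMap.range (Df v : E3 →L[ℝ] E2).toLinearMap) = 2 := by
  have hsurj : Function.Surjective (Df v) := by
    intro w
    refine ⟨e3.symm ![0, w 0 / v 0, w 1 / v 0], ?_⟩
    ext i
    have h0 : (e3.symm ![0, w 0 / v 0, w 1 / v 0] : E3) 0 = 0 := by simp [e3]
    have h1 : (e3.symm ![0, w 0 / v 0, w 1 / v 0] : E3) 1 = w 0 / v 0 := by simp [e3]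
    have h2 : (e3.symm ![0, w 0 / v 0, w 1 / v 0] : E3) 2 = w 1 / v 0 := by simp [e3]
    rw [Df_apply]
    fin_cases i <;> simp [h0, h1, h2] <;> field_simp
  rw [(LinearMap.range_eq_top (f := (Df v).toLinearMap)).2 hsurj, finrank_top]
  simp

lemma rank_Df_lt_two (v : E3) (hv : v 0 = 0) :
    Module.finrank ℝ (LinearMap.range (Df v : E3 →L[ℝ] E2).toLinearMap) < 2 := by
  set wv : E2 := e2.symm ![v 1, v 2] with hwv
  have key : ∀ h : E3, Df v h = h 0 • wv := by
    intro h
    ext i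
    rw [Df_apply]
    fin_cases i <;> simp [hwv, e2, hv, mul_comm]
  have hle : LinearMap.range (Df v : E3 →L[ℝ] E2).toLinearMap ≤ Submodule.span ℝ {wv} := by
    rintro x ⟨h, rfl⟩
    rw [show (Df v : E3 →L[ℝ] E2).toLinearMap h = Df v h from rfl, key]
    exact Submodule.smul_mem _ _ (Submodule.mem_span_singleton_self _)
  have : Module.finrank ℝ (LinearMap.range (Df v : E3 →L[ℝ] E2).toLinearMap) ≤
      Module.finrank ℝ (Submodule.span ℝ ({wv} : Set E2)) := Submodule.finrank_mono hle
  have hspan : Module.finrank ℝ (Submodule.span ℝ ({wv} : Set E2)) ≤ 1 := by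
    rcases eq_or_ne wv 0 with h | h
    · rw [h, Submodule.span_zero_singleton, finrank_bot]; omega
    · rw [finrank_span_singleton h]
  omega

def L3 (v : E3) : E3 →L[ℝ] ℝ :=
  ((v 0 • P3 0 + v 0 • P3 0) + (v 1 • P3 1 + v 1 • P3 1)) + (v 2 • P3 2 + v 2 • P3 2)

lemma norm_sq_eq (y : E3) : ‖y‖ ^ 2 = y 0 * y 0 + y 1 * y 1 + y 2 * y 2 := by
  rw [EuclideanSpace.norm_eq, Real.sq_sqrt (by positivity)]
  simp [Fin.sum_univ_three, Real.norm_eq_abs, sq_abs, sq]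

lemma hL3 (v : E3) : HasFDerivAt (fun y : E3 => ‖y‖ ^ 2) (L3 v) v := by
  have : HasFDerivAt (fun y : E3 => y 0 * y 0 + y 1 * y 1 + y 2 * y 2) (L3 v) v :=
    (((P3 0).hasFDerivAt.mul (P3 0).hasFDerivAt).add
      ((P3 1).hasFDerivAt.mul (P3 1).hasFDerivAt)).add
      ((P3 2).hasFDerivAt.mul (P3 2).hasFDerivAt)
  exact this.congr_of_eventuallyEq (Filter.Eventually.of_forall fun y => norm_sq_eq y)

def Dp (v : E3) : E3 →L[ℝ] E2 × ℝ := (Df v).prod (L3 v)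

lemma hDp (f : E3 → E2) (hf : ∀ v : E3, f v 0 = v 0 * v 1 ∧ f v 1 = v 0 * v 2)
    (v : E3) : HasFDerivAt (fun y : E3 => (f y, ‖y‖ ^ 2)) (Dp v) v :=
  (hDf f hf v).prodMk (hL3 v)

lemma L3_apply (v h : E3) : L3 v h = 2 * v 0 * h 0 + 2 * v 1 * h 1 + 2 * v 2 * h 2 := by
  simp [L3, P3, smul_eq_mul]; ring

lemma rank_Dp_eq_three (v : E3) (hv : v 0 ≠ 0)
    (hs : v 0 ^ 2 - v 1 ^ 2 - v 2 ^ 2 ≠ 0) :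
    Module.finrank ℝ (LinearMap.range (Dp v : E3 →L[ℝ] E2 × ℝ).toLinearMap) = 3 := by
  have hsurj : Function.Surjective (Dp v) := by
    intro wc
    obtain ⟨w, c⟩ := wc
    set a := w 0 with ha
    set b := w 1 with hb
    set s := v 0 ^ 2 - v 1 ^ 2 - v 2 ^ 2 with hsdef
    set x0 : ℝ := (v 0 * (c / 2) - v 1 * a - v 2 * b) / s with hx0
    set x1 : ℝ := (a - v 1 * x0) / v 0 with hx1
    set x2 : ℝ := (b - v 2 * x0) / v 0 with hx2
    refine ⟨e3.symm ![x0, x1, x2], ?_⟩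
    have h0 : (e3.symm ![x0, x1, x2] : E3) 0 = x0 := by simp [e3]
    have h1 : (e3.symm ![x0, x1, x2] : E3) 1 = x1 := by simp [e3]
    have h2 : (e3.symm ![x0, x1, x2] : E3) 2 = x2 := by simp [e3]
    have key1 : v 0 * x1 + v 1 * x0 = a := by rw [hx1]; field_simp; ring
    have key2 : v 0 * x2 + v 2 * x0 = b := by rw [hx2]; field_simp; ring
    have key3 : 2 * v 0 * x0 + 2 * v 1 * x1 + 2 * v 2 * x2 = c := by
      rw [hx1, hx2]
      field_simp
      rw [hx0]
      field_simp
      ring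
    refine Prod.ext ?_ ?_
    · show Df v (e3.symm ![x0, x1, x2]) = w
      ext i
      rw [Df_apply]
      fin_cases i
      · simpa [h0, h1, h2] using key1
      · simpa [h0, h1, h2] using key2
    · show L3 v (e3.symm ![x0, x1, x2]) = c
      rw [L3_apply, h0, h1, h2]
      exact key3
  rw [(LinearMap.range_eq_top (f := (Dp v).toLinearMap)).2 hsurj, finrank_top]
  simp [Module.finrank_prod]

-- test coordinate extensionality and zero lemmas
example (v : E3) (h : ∀ i, v i = 0) : v = 0 := by
  ext i; exact h i

example (w : E2) (h : w = 0) : w 0 = 0 := by rw [h]; rfl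

lemma critical_eq (f : E3 → E2) (hf : ∀ v : E3, f v 0 = v 0 * v 1 ∧ f v 1 = v 0 * v 2) :
    criticalSet 3 2 f = {v : E3 | v 0 = 0} := by
  ext v
  simp only [criticalSet, Set.mem_setOf_eq]
  rw [fderiv_f f hf v]
  constructor
  · intro h
    by_contra hv
    rw [rank_Df_eq_two v hv] at h
    omega
  · intro h
    exact rank_Df_lt_two v h

lemma fzero_iff (f : E3 → E2) (hf : ∀ v : E3, f v 0 = v 0 * v 1 ∧ f v 1 = v 0 * v 2)
    (v : E3) : f v = 0 ↔ (v 0 = 0 ∨ (v 1 = 0 ∧ v 2 = 0)) := by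
  constructor
  · intro h
    have h0 : v 0 * v 1 = 0 := by rw [← (hf v).1, h]; rfl
    have h1 : v 0 * v 2 = 0 := by rw [← (hf v).2, h]; rfl
    rcases mul_eq_zero.1 h0 with h' | h'
    · exact Or.inl h'
    · rcases mul_eq_zero.1 h1 with h'' | h''
      · exact Or.inl h''
      · exact Or.inr ⟨h', h''⟩
  · intro h
    ext i
    fin_cases i
    · show f v 0 = 0
      rw [(hf v).1]
      rcases h with h | h
      · rw [h, zero_mul]
      · rw [h.1, mul_zero]
    · show f v 1 = 0
      rw [(hf v).2]
      rcases h with h | h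
      · rw [h, zero_mul]
      · rw [h.2, mul_zero]

lemma pair_sub (f : E3 → E2) (hf : ∀ v : E3, f v 0 = v 0 * v 1 ∧ f v 1 = v 0 * v 2) :
    criticalSetPair 3 2 f \ f ⁻¹' {0} ⊆ {v : E3 | v 0 ^ 2 = v 1 ^ 2 + v 2 ^ 2} := by
  rintro v ⟨hpair, hnV⟩
  have hfv : f v ≠ 0 := hnV
  have hv0 : v 0 ≠ 0 := by
    intro h
    exact hfv ((fzero_iff f hf v).2 (Or.inl h))
  by_contra hC
  have hs : v 0 ^ 2 - v 1 ^ 2 - v 2 ^ 2 ≠ 0 := by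
    intro h
    apply hC
    simp only [Set.mem_setOf_eq]
    linarith
  have := rank_Dp_eq_three v hv0 hs
  simp only [criticalSetPair, Set.mem_setOf_eq] at hpair
  rw [(hDp f hf v).fderiv, this] at hpair
  omega

lemma norm_sq_eq2 (z : E2) : ‖z‖ ^ 2 = z 0 * z 0 + z 1 * z 1 := by
  rw [EuclideanSpace.norm_eq, Real.sq_sqrt (by positivity)]
  simp [Fin.sum_univ_two, Real.norm_eq_abs, sq_abs, sq]

lemma eq_of_sq_eq (a b : ℝ) (ha : 0 ≤ a) (hb : 0 ≤ b) (h : a ^ 2 = b ^ 2) : a = b := by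
  rw [← Real.sqrt_sq ha, ← Real.sqrt_sq hb, h]

set_option maxHeartbeats 1000000 in
/-- For `f(x, y, z) = (xy, xz) : ℝ³ → ℝ²`: (i) the critical set of `f` is the plane `{x = 0}`;
(ii) `V = f⁻¹(0)` is the union of `{x = 0}` and of the axis `{y = z = 0}`; (iii) `f` satisfies
the Milnor conditions (a) and (b) at the origin; (iv) for every `ε > 0` and `0 < η ≤ ε²/2` the
Milnor tube `B_ε³ ∩ f⁻¹(S_η¹)` is not connected. -/
theorem disconnected_milnor_tube_example
    (f : EuclideanSpace ℝ (Fin 3) → EuclideanSpace ℝ (Fin 2))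
    (hf : ∀ v : EuclideanSpace ℝ (Fin 3), f v 0 = v 0 * v 1 ∧ f v 1 = v 0 * v 2) :
    criticalSet 3 2 f = {v : EuclideanSpace ℝ (Fin 3) | v 0 = 0} ∧
    f ⁻¹' {0} = {v : EuclideanSpace ℝ (Fin 3) | v 0 = 0} ∪
      {v : EuclideanSpace ℝ (Fin 3) | v 1 = 0 ∧ v 2 = 0} ∧
    (MilnorConditionA 3 2 f ∧ MilnorConditionB 3 2 f) ∧
    ∀ ε : ℝ, 0 < ε → ∀ η : ℝ, 0 < η → η ≤ ε ^ 2 / 2 →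
      ¬ IsPreconnected (closedBall (0 : EuclideanSpace ℝ (Fin 3)) ε ∩
        f ⁻¹' (sphere (0 : EuclideanSpace ℝ (Fin 2)) η)) := by
  have hcrit := critical_eq f hf
  have hV : f ⁻¹' {0} = {v : E3 | v 0 = 0} ∪ {v : E3 | v 1 = 0 ∧ v 2 = 0} := by
    ext v
    simp only [Set.mem_preimage, Set.mem_singleton_iff, Set.mem_union, Set.mem_setOf_eq]
    exact fzero_iff f hf v
  have hA : MilnorConditionA 3 2 f :=
    ⟨Set.univ, Filter.univ_mem, fun x _ hx =>
      (fzero_iff f hf x).2 (Or.inl (by rw [hcrit] at hx; exact hx))⟩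
  have hB : MilnorConditionB 3 2 f := by
    refine ⟨Set.univ, Filter.univ_mem, ?_⟩
    rintro v ⟨⟨-, hV'⟩, hcl⟩
    have hclosed : IsClosed {v : E3 | v 0 ^ 2 = v 1 ^ 2 + v 2 ^ 2} :=
      isClosed_eq ((P3 0).continuous.pow 2)
        (((P3 1).continuous.pow 2).add ((P3 2).continuous.pow 2))
    have hC : v 0 ^ 2 = v 1 ^ 2 + v 2 ^ 2 :=
      closure_minimal (pair_sub f hf) hclosed hcl
    have h0 := (fzero_iff f hf v).1 hV'
    have hz : v 0 = 0 ∧ v 1 = 0 ∧ v 2 = 0 := by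
      rcases h0 with h | ⟨h1, h2⟩
      · have hs2 : v 1 ^ 2 + v 2 ^ 2 = 0 := by rw [← hC, h]; ring
        have h1 : v 1 = 0 := pow_eq_zero_iff (n := 2) (by norm_num) |>.mp
          (by nlinarith [sq_nonneg (v 2)])
        have h2 : v 2 = 0 := pow_eq_zero_iff (n := 2) (by norm_num) |>.mp
          (by nlinarith [sq_nonneg (v 1)])
        exact ⟨h, h1, h2⟩
      · have h0' : v 0 = 0 := pow_eq_zero_iff (n := 2) (by norm_num) |>.mp
          (by rw [hC, h1, h2]; ring)
        exact ⟨h0', h1, h2⟩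
    show v ∈ ({0} : Set E3)
    rw [Set.mem_singleton_iff]
    ext i
    fin_cases i
    · exact hz.1
    · exact hz.2.1
    · exact hz.2.2
  refine ⟨hcrit, hV, ⟨hA, hB⟩, ?_⟩
  intro ε hε η hη hηε hconn
  set r := Real.sqrt η with hr
  have hrpos : 0 < r := Real.sqrt_pos.2 hη
  have hrr : r * r = η := Real.mul_self_sqrt hη.le
  set p : E3 := e3.symm ![r, r, 0] with hp
  set q : E3 := e3.symm ![-r, r, 0] with hq
  have hp0 : p 0 = r := by simp [hp, e3]
  have hp1 : p 1 = r := by simp [hp, e3]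
  have hp2 : p 2 = 0 := by simp [hp, e3]
  have hq0 : q 0 = -r := by simp [hq, e3]
  have hq1 : q 1 = r := by simp [hq, e3]
  have hq2 : q 2 = 0 := by simp [hq, e3]
  have hball : ∀ x : E3, x 0 * x 0 + x 1 * x 1 + x 2 * x 2 = 2 * η →
      x ∈ closedBall (0 : E3) ε := by
    intro x hx
    rw [mem_closedBall_zero_iff]
    have hn : ‖x‖ ^ 2 = 2 * η := by rw [norm_sq_eq]; exact hx
    by_contra hlt
    push_neg at hlt
    nlinarith [norm_nonneg x]
  have hsphere : ∀ x : E3, (f x 0) ^ 2 = η ^ 2 → f x 1 = 0 →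
      f x ∈ sphere (0 : E2) η := by
    intro x h1 h2
    rw [mem_sphere_zero_iff_norm]
    apply eq_of_sq_eq _ _ (norm_nonneg _) hη.le
    rw [norm_sq_eq2, h2]
    nlinarith [h1]
  have hps : p ∈ closedBall (0 : E3) ε ∩ f ⁻¹' (sphere (0 : E2) η) := by
    refine ⟨hball p (by rw [hp0, hp1, hp2]; nlinarith), ?_⟩
    exact hsphere p (by rw [(hf p).1, hp0, hp1]; nlinarith)
      (by rw [(hf p).2, hp0, hp2, mul_zero])
  have hqs : q ∈ closedBall (0 : E3) ε ∩ f ⁻¹' (sphere (0 : E2) η) := by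
    refine ⟨hball q (by rw [hq0, hq1, hq2]; nlinarith), ?_⟩
    exact hsphere q (by rw [(hf q).1, hq0, hq1]; nlinarith)
      (by rw [(hf q).2, hq0, hq2, mul_zero])
  have hsub : closedBall (0 : E3) ε ∩ f ⁻¹' (sphere (0 : E2) η) ⊆
      {x : E3 | 0 < x 0} ∪ {x : E3 | x 0 < 0} := by
    rintro x ⟨-, hx⟩
    have hnx : ‖f x‖ = η := by
      rw [Set.mem_preimage, mem_sphere_zero_iff_norm] at hx
      exact hx
    have hx0 : x 0 ≠ 0 := by
      intro h
      rw [(fzero_iff f hf x).2 (Or.inl h), norm_zero] at hnx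
      exact (ne_of_lt hη) hnx
    rcases lt_or_gt_of_ne hx0 with h | h
    · exact Or.inr h
    · exact Or.inl h
  obtain ⟨x, -, hxu, hxw⟩ := hconn {x : E3 | 0 < x 0} {x : E3 | x 0 < 0}
    (isOpen_lt continuous_const (P3 0).continuous)
    (isOpen_lt (P3 0).continuous continuous_const)
    hsub ⟨p, hps, by simpa [Set.mem_setOf_eq, hp0] using hrpos⟩
    ⟨q, hqs, by simp only [Set.mem_setOf_eq, hq0]; linarith⟩
  simp only [Set.mem_setOf_eq] at hxu hxw
  linarith
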